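/- Let Γ be a graph on which a group G acts by automorphisms, N ⊲ G normal, and let α be a vertex of finite valency. Then the valency of the vertex Nα in the quotient graph N\Γ is at most the valency of α in Γ, with equality if and only if for every vertex β in the closed ball B(α,1), the intersection of the N-orbit of β with the vertex set of B(α,1) equals {β}. -/

import Mathlib

/-- The quotient graph `N\Γ`: vertices are `N`-orbits, and two distinct orbits are adjacent
iff they contain adjacent representatives. -/
def quotientGraph {G V : Type*} [Group G] [MulAction G V] (Γ : SimpleGraph V)
    (N : Subgroup G) : SimpleGraph (Quotient (MulAction.orbitRel N V)) where
  Adj x y := x ≠ y ∧ ∃ a b : V, (Quotient.mk'' a : Quotient (MulAction.orbitRel N V)) = x ∧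
    (Quotient.mk'' b : Quotient (MulAction.orbitRel N V)) = y ∧ Γ.Adj a b
  symm := by
    constructor
    rintro x y ⟨hne, a, b, ha, hb, hab⟩
    exact ⟨hne.symm, b, a, hb, ha, hab.symm⟩
  loopless := by
    constructor
    rintro x ⟨hne, -⟩
    exact hne rfl

/-!
Since `N` acts by automorphisms, every edge of `N\Γ` at `Nα` lifts to an edge at `α` itself,
so the neighbours of `Nα` are the orbits of the neighbours of `α`, minus `Nα`. Counting, the
valency can only drop, and it is preserved exactly when the orbit map is injective on the
neighbours of `α` and does not send any of them to `Nα`, i.e. when it is injective on `B(α,1)`.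
-/

namespace Set

variable {α β : Type*} {f : α → β} {s : Set α} {a : α}

theorem ncard_image_sdiff_singleton_le (hs : s.Finite) : (f '' s \ {f a}).ncard ≤ s.ncard :=
  (ncard_sdiff_singleton_le _ _).trans (ncard_image_le hs)

theorem ncard_image_sdiff_singleton_eq_iff (hs : s.Finite) (ha : a ∉ s) :
    (f '' s \ {f a}).ncard = s.ncard ↔ InjOn f (insert a s) := by
  rw [injOn_insert ha, ← ncard_image_iff hs]
  constructor
  · intro h
    have hle := ncard_sdiff_singleton_le (f '' s) (f a)
    have himage : (f '' s).ncard = s.ncard := by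
      have := ncard_image_le (f := f) hs
      omega
    refine ⟨himage, fun hmem => ?_⟩
    have := ncard_sdiff_singleton_lt_of_mem hmem (hs.image f)
    omega
  · rintro ⟨himage, hnotMem⟩
    rw [sdiff_singleton_eq_self hnotMem, himage]

end Set

namespace MulAction

theorem forall_orbit_inter_eq_singleton_iff_injOn {H V : Type*} [Group H] [MulAction H V]
    (B : Set V) :
    (∀ β ∈ B, orbit H β ∩ B = {β}) ↔
      B.InjOn (Quotient.mk'' : V → Quotient (orbitRel H V)) := by
  constructor
  · intro h β hβ γ hγ hβγ
    have : β ∈ orbit H γ ∩ B := ⟨Quotient.eq''.mp hβγ, hβ⟩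
    rwa [h γ hγ] at this
  · intro h β hβ
    refine Set.eq_singleton_iff_unique_mem.mpr ⟨⟨mem_orbit_self β, hβ⟩, ?_⟩
    rintro γ ⟨hγβ, hγ⟩
    exact h hγ hβ (Quotient.eq''.mpr hγβ)

end MulAction

theorem quotientGraph_neighborSet_mk {G V : Type*} [Group G] [MulAction G V]
    (Γ : SimpleGraph V) (N : Subgroup G)
    (hN : ∀ g ∈ N, ∀ a b : V, Γ.Adj a b → Γ.Adj (g • a) (g • b)) (α : V) :
    (quotientGraph Γ N).neighborSet (Quotient.mk'' α) =
      Quotient.mk'' '' Γ.neighborSet α \ {Quotient.mk'' α} := by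
  ext x
  constructor
  · rintro ⟨hne, a, b, ha, rfl, hab⟩
    obtain ⟨n, rfl⟩ := Quotient.eq''.mp ha
    refine ⟨⟨n⁻¹ • b, ?_, Quotient.eq''.mpr ⟨n⁻¹, rfl⟩⟩, fun h => hne h.symm⟩
    simpa [Subgroup.smul_def] using hN _ (n⁻¹).2 _ _ hab
  · rintro ⟨⟨β, hβ, rfl⟩, hne⟩
    exact ⟨fun h => hne h.symm, α, β, rfl, rfl, hβ⟩

theorem quotientGraph_valency_general {G V : Type*} [Group G] [MulAction G V] (Γ : SimpleGraph V)
    (hact : ∀ (g : G) (a b : V), Γ.Adj (g • a) (g • b) ↔ Γ.Adj a b)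
    (N : Subgroup G) (α : V) (hfin : (Γ.neighborSet α).Finite) :
    ((quotientGraph Γ N).neighborSet (Quotient.mk'' α)).ncard ≤ (Γ.neighborSet α).ncard ∧
    (((quotientGraph Γ N).neighborSet (Quotient.mk'' α)).ncard = (Γ.neighborSet α).ncard ↔
      ∀ β ∈ ({α} ∪ Γ.neighborSet α : Set V),
        MulAction.orbit N β ∩ ({α} ∪ Γ.neighborSet α : Set V) = {β}) := by
  rw [quotientGraph_neighborSet_mk Γ N (fun g _ a b => (hact g a b).mpr) α,
    MulAction.forall_orbit_inter_eq_singleton_iff_injOn, ← Set.insert_eq]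
  exact ⟨Set.ncard_image_sdiff_singleton_le hfin,
    Set.ncard_image_sdiff_singleton_eq_iff hfin Γ.notMem_neighborSet_self⟩

/-- The valency of `Nα` in the quotient graph `N\Γ` is at most the valency of `α` in `Γ`;
for `α` of finite valency, equality holds iff for every vertex `β` of the closed ball
`B(α,1)`, the intersection of the `N`-orbit of `β` with `B(α,1)` is `{β}`. -/
theorem quotientGraph_valency {G V : Type*} [Group G] [MulAction G V] (Γ : SimpleGraph V)
    (hact : ∀ (g : G) (a b : V), Γ.Adj (g • a) (g • b) ↔ Γ.Adj a b)
    (N : Subgroup G) [N.Normal] (α : V) (hfin : (Γ.neighborSet α).Finite) :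
    ((quotientGraph Γ N).neighborSet (Quotient.mk'' α)).ncard ≤ (Γ.neighborSet α).ncard ∧
    (((quotientGraph Γ N).neighborSet (Quotient.mk'' α)).ncard = (Γ.neighborSet α).ncard ↔
      ∀ β ∈ ({α} ∪ Γ.neighborSet α : Set V),
        MulAction.orbit N β ∩ ({α} ∪ Γ.neighborSet α : Set V) = {β}) :=
  quotientGraph_valency_general Γ hact N α hfin
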